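/- arXiv:2307.06654 — 2 statements merged into one kernel-verified Lean document; each statement's English description precedes it below -/
import Mathlib

section
/- Forward direction of the NP-hardness reduction: let s_1,…,s_m be positive integers with β = Σ_{i=1}^m s_i, and construct the SIPP instance with n = (m+1)² squares, side lengths l_1 = (m+1)β and, for each i ∈ {1,…,m}, l_j = (m−i+1)β + s_i for j = i²+1,…,i(i+1) and l_j = (m−i+1)β for j = i(i+1)+1,…,(i+1)², and width bound b = λ = (m+1)(m+2)β/2 + β/2. If there exists S ⊆ {1,…,m} with Σ_{i∈S} s_i = β/2, then there exists a layout A (indeed an RC layout) with W(A) = b and H(A) = λ; in particular the constructed SIPP instance admits a layout of width at most b and height at most λ. -/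
/-!
Starting from the square of side `(m+1)β`, stage `i = 1, …, m` appends the `i` squares of side
`(m-i+1)β + s_i` and then the `i+1` squares of side `(m-i+1)β`: as a column followed by a row
when `i ∈ S`, as a row followed by a column otherwise. No square appended at stage `i` is larger
than a square already placed, so an appended column adds its side to the width without changing
the height, and symmetrically for rows. Thus the width is `Σ_{i=0}^m (m+1-i)β + Σ_{i ∈ S} s_i`
and the height is the same with `S` replaced by its complement; both equal
`(m+1)(m+2)β/2 + β/2` exactly because `S` splits `β` in half.
-/

/-- A `p × q` layout: a matrix whose entries are exactly the integers `1, …, p*q`. -/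
def IsLayout (p q : ℕ) (A : Fin p → Fin q → ℕ) : Prop :=
  Function.Injective (fun ij : Fin p × Fin q => A ij.1 ij.2) ∧
  (Set.range fun ij : Fin p × Fin q => A ij.1 ij.2) = Set.Icc 1 (p * q)

/-- Width of a layout with respect to side lengths `l`. -/
def layW (l : ℕ → ℕ) {p q : ℕ} (A : Fin p → Fin q → ℕ) : ℕ :=
  ∑ j : Fin q, Finset.univ.sup fun i : Fin p => l (A i j)

/-- Height of a layout with respect to side lengths `l`. -/
def layH (l : ℕ → ℕ) {p q : ℕ} (A : Fin p → Fin q → ℕ) : ℕ :=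
  ∑ i : Fin p, Finset.univ.sup fun j : Fin q => l (A i j)

/-- RC layouts: obtainable from the 1×1 base layout by add-row and add-column operations. -/
inductive IsRC : {p q : ℕ} → (Fin p → Fin q → ℕ) → Prop
  | base : IsRC (fun (_ : Fin 1) (_ : Fin 1) => 1)
  | addRow {p q : ℕ} {A : Fin p → Fin q → ℕ} (h : IsRC A) :
      IsRC (fun (i : Fin (p + 1)) (j : Fin q) =>
        if hi : (i : ℕ) < p then A ⟨i, hi⟩ j else p * q + (j : ℕ) + 1)
  | addCol {p q : ℕ} {A : Fin p → Fin q → ℕ} (h : IsRC A) :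
      IsRC (fun (i : Fin p) (j : Fin (q + 1)) =>
        if hj : (j : ℕ) < q then A i ⟨j, hj⟩ else p * q + (i : ℕ) + 1)

open Finset Function

theorem Fin.sup_univ_castSucc {α : Type*} [SemilatticeSup α] [OrderBot α] {n : ℕ}
    (f : Fin (n + 1) → α) :
    univ.sup f = (univ.sup fun i : Fin n => f i.castSucc) ⊔ f (Fin.last n) := by
  rw [Fin.univ_castSuccEmb, sup_cons, sup_map, sup_comm]
  rfl

section Layouts

variable {p q : ℕ}

def addRow (A : Fin p → Fin q → ℕ) : Fin (p + 1) → Fin q → ℕ :=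
  fun i j => if hi : (i : ℕ) < p then A ⟨i, hi⟩ j else p * q + (j : ℕ) + 1

def addCol (A : Fin p → Fin q → ℕ) : Fin p → Fin (q + 1) → ℕ :=
  fun i j => if hj : (j : ℕ) < q then A i ⟨j, hj⟩ else p * q + (i : ℕ) + 1

@[simp]
theorem addRow_castSucc (A : Fin p → Fin q → ℕ) (i : Fin p) (j : Fin q) :
    addRow A i.castSucc j = A i j := by
  simp [addRow]

@[simp]
theorem addRow_last (A : Fin p → Fin q → ℕ) (j : Fin q) :
    addRow A (Fin.last p) j = p * q + j + 1 := by
  simp [addRow]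

theorem swap_addRow (A : Fin p → Fin q → ℕ) : swap (addRow A) = addCol (swap A) := by
  ext j i
  simp [addRow, addCol, swap, Nat.mul_comm]

theorem swap_addCol (A : Fin p → Fin q → ℕ) : swap (addCol A) = addRow (swap A) :=
  (congrArg swap (swap_addRow (swap A))).symm

theorem addCol_eq_swap_addRow_swap (A : Fin p → Fin q → ℕ) :
    addCol A = swap (addRow (swap A)) :=
  congrArg swap (swap_addCol A)

theorem isLayout_one : IsLayout 1 1 fun _ _ => 1 := by
  refine ⟨fun a b _ => Prod.ext (Subsingleton.elim _ _) (Subsingleton.elim _ _), ?_⟩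
  ext x
  simp [le_antisymm_iff]

theorem IsLayout.mem_Icc {A : Fin p → Fin q → ℕ} (h : IsLayout p q A) (i : Fin p) (j : Fin q) :
    A i j ∈ Set.Icc 1 (p * q) :=
  h.2 ▸ ⟨(i, j), rfl⟩

theorem IsLayout.swap {A : Fin p → Fin q → ℕ} (h : IsLayout p q A) : IsLayout q p (swap A) := by
  refine ⟨fun a b hab => Prod.swap_injective (h.1 hab), ?_⟩
  rw [Nat.mul_comm, ← h.2]
  exact (Equiv.prodComm _ _).surjective.range_comp (fun ij : Fin p × Fin q => A ij.1 ij.2)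

theorem IsLayout.of_injective_of_mem {A : Fin p → Fin q → ℕ}
    (hinj : Injective fun ij : Fin p × Fin q => A ij.1 ij.2)
    (hmem : ∀ i j, A i j ∈ Set.Icc 1 (p * q)) : IsLayout p q A := by
  refine ⟨hinj, Set.eq_of_subset_of_ncard_le (Set.range_subset_iff.2 fun ij => hmem _ _) ?_⟩
  simp [Set.ncard_range_of_injective hinj]

theorem IsLayout.addRow {A : Fin p → Fin q → ℕ} (h : IsLayout p q A) :
    IsLayout (p + 1) q (addRow A) := by
  have hne (i : Fin p) (j : Fin q) (k : ℕ) : A i j ≠ p * q + k + 1 := by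
    have := (h.mem_Icc i j).2
    omega
  refine .of_injective_of_mem ?_ fun i j => ?_
  · rintro ⟨i, j⟩ ⟨i', j'⟩ hij
    induction i using Fin.lastCases <;> induction i' using Fin.lastCases <;>
      simp only [addRow_castSucc, addRow_last] at hij
    · simpa [Fin.ext_iff] using hij
    · exact (hne _ _ _ hij.symm).elim
    · exact (hne _ _ _ hij).elim
    · simpa using @h.1 (_, _) (_, _) hij
  · induction i using Fin.lastCases with
    | last => simp [add_mul]
    | cast i => simpa using ⟨(h.mem_Icc i j).1, (h.mem_Icc i j).2.trans (by nlinarith)⟩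

theorem IsLayout.addCol {A : Fin p → Fin q → ℕ} (h : IsLayout p q A) :
    IsLayout p (q + 1) (addCol A) := by
  rw [addCol_eq_swap_addRow_swap]
  exact h.swap.addRow.swap

variable (l : ℕ → ℕ)

theorem layW_swap (A : Fin p → Fin q → ℕ) : layW l (swap A) = layH l A := rfl

theorem layH_swap (A : Fin p → Fin q → ℕ) : layH l (swap A) = layW l A := rfl

theorem layH_addRow (A : Fin p → Fin q → ℕ) :
    layH l (addRow A) = layH l A + univ.sup fun j : Fin q => l (p * q + j + 1) := by
  simp [layH, Fin.sum_univ_castSucc]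

theorem layW_addRow_of_le {A : Fin p → Fin q → ℕ}
    (h : ∀ j : Fin q, l (p * q + j + 1) ≤ univ.sup fun i => l (A i j)) :
    layW l (addRow A) = layW l A := by
  simp [layW, Fin.sup_univ_castSucc, sup_of_le_left (h _)]

theorem layW_addCol (A : Fin p → Fin q → ℕ) :
    layW l (addCol A) = layW l A + univ.sup fun i : Fin p => l (p * q + i + 1) := by
  rw [addCol_eq_swap_addRow_swap, layW_swap, layH_addRow, layH_swap, Nat.mul_comm q p]

variable {l}

theorem le_addRow {A : Fin p → Fin q → ℕ} {c : ℕ} (hA : ∀ i j, c ≤ l (A i j))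
    (hnew : ∀ j : Fin q, c ≤ l (p * q + j + 1)) (i : Fin (p + 1)) (j : Fin q) :
    c ≤ l (addRow A i j) := by
  induction i using Fin.lastCases <;> simp [hA, hnew]

theorem le_addCol {A : Fin p → Fin q → ℕ} {c : ℕ} (hA : ∀ i j, c ≤ l (A i j))
    (hnew : ∀ i : Fin p, c ≤ l (p * q + i + 1)) (i : Fin p) (j : Fin (q + 1)) :
    c ≤ l (addCol A i j) := by
  rw [addCol_eq_swap_addRow_swap]
  exact le_addRow (fun j i => hA i j) (by simpa [Nat.mul_comm q p] using hnew) j i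

end Layouts

def reductionLayout (P : ℕ → Prop) [DecidablePred P] : (k : ℕ) → Fin (k + 1) → Fin (k + 1) → ℕ
  | 0 => fun _ _ => 1
  | k + 1 =>
    if P (k + 1) then addRow (addCol (reductionLayout P k))
    else addCol (addRow (reductionLayout P k))

section ReductionLayout

variable (P : ℕ → Prop) [DecidablePred P]

theorem isLayout_reductionLayout : ∀ k, IsLayout (k + 1) (k + 1) (reductionLayout P k)
  | 0 => isLayout_one
  | k + 1 => by
    rw [reductionLayout]
    split_ifs
    exacts [(isLayout_reductionLayout k).addCol.addRow, (isLayout_reductionLayout k).addRow.addCol]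

theorem isRC_reductionLayout : ∀ k, IsRC (reductionLayout P k)
  | 0 => .base
  | k + 1 => by
    rw [reductionLayout]
    split_ifs
    exacts [(isRC_reductionLayout k).addCol.addRow, (isRC_reductionLayout k).addRow.addCol]

theorem swap_reductionLayout :
    ∀ k, swap (reductionLayout P k) = reductionLayout (fun i => ¬P i) k
  | 0 => rfl
  | k + 1 => by
    simp only [reductionLayout]
    split_ifs <;> simp [swap_addRow, swap_addCol, swap_reductionLayout k]

end ReductionLayout

structure ReductionSides (m β : ℕ) (s l : ℕ → ℕ) : Prop where
  one : l 1 = (m + 1) * β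
  first : ∀ i, 1 ≤ i → i ≤ m → ∀ j, i ^ 2 + 1 ≤ j → j ≤ i * (i + 1) →
    l j = (m - i + 1) * β + s i
  second : ∀ i, 1 ≤ i → i ≤ m → ∀ j, i * (i + 1) + 1 ≤ j → j ≤ (i + 1) ^ 2 →
    l j = (m - i + 1) * β
  s_le : ∀ i, 1 ≤ i → i ≤ m → s i ≤ β

namespace ReductionSides

variable {m β : ℕ} {s l : ℕ → ℕ} {k : ℕ}

theorem first_block (hl : ReductionSides m β s l) (hk : k < m) {x : ℕ} (hx : x < k + 1) :
    l ((k + 1) * (k + 1) + x + 1) = (m - k) * β + s (k + 1) := by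
  rw [hl.first (k + 1) (by omega) hk _ (by nlinarith) (by nlinarith)]
  congr 2
  omega

theorem second_block (hl : ReductionSides m β s l) (hk : k < m) {x : ℕ} (hx : x < k + 2) :
    l ((k + 1) * (k + 2) + x + 1) = (m - k) * β := by
  rw [hl.second (k + 1) (by omega) hk _ (by nlinarith) (by nlinarith)]
  congr 1
  omega

theorem le_first_block (hl : ReductionSides m β s l) (hk : k < m) (x : Fin (k + 1)) :
    (m - k) * β ≤ l ((k + 1) * (k + 1) + x + 1) :=
  (hl.first_block hk x.2).symm ▸ Nat.le_add_right _ _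

theorem le_reductionLayout (hl : ReductionSides m β s l) (P : ℕ → Prop) [DecidablePred P] :
    ∀ k ≤ m, ∀ i j, (m - k + 1) * β ≤ l (reductionLayout P k i j)
  | 0, _, _, _ => by simp [reductionLayout, hl.one]
  | k + 1, hk, i, j => by
    have hprev (i j) : (m - k) * β ≤ l (reductionLayout P k i j) :=
      (Nat.mul_le_mul_right _ (by omega)).trans (le_reductionLayout hl P k (by omega) i j)
    have hsecond (x : Fin (k + 2)) : (m - k) * β ≤ l ((k + 1) * (k + 2) + x + 1) :=
      (hl.second_block hk x.2).ge
    rw [show m - (k + 1) + 1 = m - k by omega, reductionLayout]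
    split_ifs
    · exact le_addRow (le_addCol hprev (hl.le_first_block hk)) hsecond i j
    · exact le_addCol (le_addRow hprev (hl.le_first_block hk))
        (Nat.mul_comm (k + 2) (k + 1) ▸ hsecond) i j

theorem layW_reductionLayout (hl : ReductionSides m β s l) (P : ℕ → Prop) [DecidablePred P] :
    ∀ k ≤ m, layW l (reductionLayout P k) =
      ∑ i ∈ range (k + 1), (m + 1 - i) * β + ∑ i ∈ Icc 1 k with P i, s i
  | 0, _ => by simp [reductionLayout, layW, hl.one]
  | k + 1, hk => by
    have hprev (i j) : (m - k) * β + s (k + 1) ≤ l (reductionLayout P k i j) :=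
      calc (m - k) * β + s (k + 1) ≤ (m - k) * β + β := by gcongr; exact hl.s_le _ (by omega) hk
        _ = (m - k + 1) * β := by ring
        _ ≤ _ := le_reductionLayout hl P k (by omega) i j
    have hsup_first : (univ.sup fun x : Fin (k + 1) => l ((k + 1) * (k + 1) + x + 1)) =
        (m - k) * β + s (k + 1) :=
      (sup_congr rfl fun x _ => hl.first_block hk x.2).trans (sup_const univ_nonempty _)
    have hsup_second : (univ.sup fun x : Fin (k + 2) => l ((k + 2) * (k + 1) + x + 1)) =
        (m - k) * β :=
      (sup_congr rfl fun x _ => Nat.mul_comm (k + 1) (k + 2) ▸ hl.second_block hk x.2).trans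
        (sup_const univ_nonempty _)
    rw [sum_range_succ, sum_filter, sum_Icc_succ_top (by omega), ← sum_filter,
      show m + 1 - (k + 1) = m - k by omega, reductionLayout]
    split_ifs
    · rw [layW_addRow_of_le, layW_addCol, layW_reductionLayout hl P k (by omega), hsup_first]
      · ring
      · intro j
        rw [hl.second_block hk j.2]
        exact le_sup_of_le (mem_univ 0) (le_addCol (fun i j => le_self_add.trans (hprev i j))
          (hl.le_first_block hk) 0 j)
    · rw [layW_addCol, layW_addRow_of_le, layW_reductionLayout hl P k (by omega), hsup_second]
      · ring
      · intro j
        rw [hl.first_block hk j.2]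
        exact le_sup_of_le (mem_univ 0) (hprev 0 j)

theorem layH_reductionLayout (hl : ReductionSides m β s l) (P : ℕ → Prop) [DecidablePred P]
    (hk : k ≤ m) : layH l (reductionLayout P k) =
      ∑ i ∈ range (k + 1), (m + 1 - i) * β + ∑ i ∈ Icc 1 k with ¬P i, s i := by
  rw [← layW_swap, swap_reductionLayout, hl.layW_reductionLayout _ k hk]

end ReductionSides

theorem two_mul_sum_range_sub (n : ℕ) :
    2 * ∑ i ∈ range (n + 1), (n + 1 - i) = (n + 1) * (n + 2) := by
  induction n with
  | zero => simp
  | succ n ih =>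
    rw [sum_range_succ']
    simp only [Nat.add_sub_add_right, Nat.sub_zero, mul_add, ih]
    ring

theorem partition_to_sipp_general (m : ℕ) (s : ℕ → ℕ)
    (β : ℕ) (hβ : β = ∑ i ∈ Finset.Icc 1 m, s i)
    (l : ℕ → ℕ) (hl1 : l 1 = (m + 1) * β)
    (hla : ∀ i, 1 ≤ i → i ≤ m → ∀ j, i ^ 2 + 1 ≤ j → j ≤ i * (i + 1) →
      l j = (m - i + 1) * β + s i)
    (hlb : ∀ i, 1 ≤ i → i ≤ m → ∀ j, i * (i + 1) + 1 ≤ j → j ≤ (i + 1) ^ 2 →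
      l j = (m - i + 1) * β)
    (S : Finset ℕ) (hS : S ⊆ Finset.Icc 1 m)
    (hsum : (∑ i ∈ S, (s i : ℚ)) = (β : ℚ) / 2) :
    ∃ (p q : ℕ) (A : Fin p → Fin q → ℕ),
      (m + 1) ^ 2 ≤ p * q ∧ IsLayout p q A ∧ IsRC A ∧
      (layW l A : ℚ) = ((m + 1) * (m + 2) * β : ℚ) / 2 + (β : ℚ) / 2 ∧
      (layH l A : ℚ) = ((m + 1) * (m + 2) * β : ℚ) / 2 + (β : ℚ) / 2 := by
  have hl : ReductionSides m β s l := ⟨hl1, hla, hlb, fun i hi1 him =>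
    hβ ▸ single_le_sum (fun _ _ => Nat.zero_le _) (mem_Icc.2 ⟨hi1, him⟩)⟩
  have hgauss : (2 * ∑ i ∈ range (m + 1), (m + 1 - i) : ℚ) = (m + 1) * (m + 2) := by
    exact_mod_cast two_mul_sum_range_sub m
  have hin : ∑ i ∈ Icc 1 m with i ∈ S, s i = ∑ i ∈ S, s i := by
    rw [filter_mem_eq_inter, inter_eq_right.2 hS]
  refine ⟨m + 1, m + 1, reductionLayout (· ∈ S) m, (sq _).le, isLayout_reductionLayout _ m,
    isRC_reductionLayout _ m, ?_, ?_⟩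
  · rw [hl.layW_reductionLayout _ m le_rfl, ← sum_mul, hin]
    push_cast at hgauss ⊢
    linear_combination hsum + (β : ℚ) / 2 * hgauss
  · have hsplit : ∑ i ∈ S, s i + ∑ i ∈ Icc 1 m with i ∉ S, s i = β := by
      rw [← hin, hβ]
      exact sum_filter_add_sum_filter_not _ _ _
    have hsplitQ : (∑ i ∈ S, s i + ∑ i ∈ Icc 1 m with i ∉ S, s i : ℚ) = β := by
      exact_mod_cast hsplit
    rw [hl.layH_reductionLayout _ le_rfl, ← sum_mul]
    push_cast at hgauss hsplitQ ⊢
    linear_combination hsplitQ - hsum + (β : ℚ) / 2 * hgauss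

/-- Forward direction of the NP-hardness reduction: if the partition
instance `s_1, …, s_m` (with `β = Σ s_i`) has a subset `S` with `Σ_{i∈S} s_i = β/2`, then the
constructed SIPP instance admits a layout (indeed an RC layout) with width and height both
exactly `(m+1)(m+2)β/2 + β/2`. -/
theorem partition_to_sipp (m : ℕ) (s : ℕ → ℕ)
    (hs : ∀ i, 1 ≤ i → i ≤ m → 0 < s i)
    (β : ℕ) (hβ : β = ∑ i ∈ Finset.Icc 1 m, s i)
    (l : ℕ → ℕ) (hl1 : l 1 = (m + 1) * β)
    (hla : ∀ i, 1 ≤ i → i ≤ m → ∀ j, i ^ 2 + 1 ≤ j → j ≤ i * (i + 1) →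
      l j = (m - i + 1) * β + s i)
    (hlb : ∀ i, 1 ≤ i → i ≤ m → ∀ j, i * (i + 1) + 1 ≤ j → j ≤ (i + 1) ^ 2 →
      l j = (m - i + 1) * β)
    (S : Finset ℕ) (hS : S ⊆ Finset.Icc 1 m)
    (hsum : (∑ i ∈ S, (s i : ℚ)) = (β : ℚ) / 2) :
    ∃ (p q : ℕ) (A : Fin p → Fin q → ℕ),
      (m + 1) ^ 2 ≤ p * q ∧ IsLayout p q A ∧ IsRC A ∧
      (layW l A : ℚ) = ((m + 1) * (m + 2) * β : ℚ) / 2 + (β : ℚ) / 2 ∧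
      (layH l A : ℚ) = ((m + 1) * (m + 2) * β : ℚ) / 2 + (β : ℚ) / 2 :=
  partition_to_sipp_general m s β hβ l hl1 hla hlb S hS hsum
end

section
/- Backward direction of the NP-hardness reduction: let s_1,…,s_m be positive integers with β = Σ_{i=1}^m s_i, and construct the SIPP instance with n = (m+1)² squares, side lengths l_1 = (m+1)β and, for each i ∈ {1,…,m}, l_j = (m−i+1)β + s_i for j = i²+1,…,i(i+1) and l_j = (m−i+1)β for j = i(i+1)+1,…,(i+1)², and width bound b = λ = (m+1)(m+2)β/2 + β/2. If there exists a layout A (with pq ≥ n, dummy side lengths 0 for indices beyond n) satisfying W(A) ≤ b and H(A) ≤ λ, then there exists a subset S ⊆ {1,…,m} with Σ_{i∈S} s_i = β/2. -/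
open Finset

theorem two_mul_le_add_of_mul_self_le_mul {a b i : ℕ} (h : i * i ≤ a * b) : 2 * i ≤ a + b := by
  nlinarith [sq_nonneg ((a : ℤ) - b)]

theorem two_mul_add_one_le_add_of_mul_succ_le_mul {a b i : ℕ} (hi : 0 < i)
    (h : i * (i + 1) ≤ a * b) : 2 * i + 1 ≤ a + b := by
  nlinarith [sq_nonneg ((a : ℤ) - b)]

theorem eq_of_mul_self_le_mul_of_add_eq {a b i : ℕ} (h : i * i ≤ a * b) (hab : a + b = 2 * i) :
    a = b := by
  nlinarith [sq_nonneg ((a : ℤ) - b)]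

theorem sub_eq_one_or_of_mul_succ_le_mul_of_add_eq {a b i : ℕ} (h : i * (i + 1) ≤ a * b)
    (hab : a + b = 2 * i + 1) : (a : ℤ) - b = 1 ∨ (a : ℤ) - b = -1 := by
  zify at h hab
  have hsq : ((a : ℤ) - b) ^ 2 ≤ 1 := by nlinarith
  have hne : (a : ℤ) - b ≠ 0 := by omega
  have := abs_le.mp ((sq_le_one_iff_abs_le_one _).mp hsq)
  omega

theorem Finset.eq_of_forall_le_of_sum_le {ι : Type*} {T : Finset ι} {F : ι → ℕ} {k : ℕ}
    (hle : ∀ t ∈ T, k ≤ F t) (hsum : ∑ t ∈ T, F t ≤ #T * k) : ∀ t ∈ T, F t = k := by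
  have hcard : ∑ _t ∈ T, k = ∑ t ∈ T, F t := by
    rw [sum_const, smul_eq_mul]
    exact le_antisymm (by simpa using card_nsmul_le_sum T F k hle) hsum
  exact fun t ht => ((sum_eq_sum_iff_of_le hle).mp hcard t ht).symm

theorem Finset.sum_Ioc_eq_sum_Icc_of_antitone {M : Type*} [AddCommMonoid M] (F : ℕ → M)
    {b : ℕ → ℕ} (hb : Antitone b) (n : ℕ) :
    ∑ t ∈ Ioc (b n) (b 0), F t = ∑ i ∈ Icc 1 n, ∑ t ∈ Ioc (b i) (b (i - 1)), F t := by
  induction n with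
  | zero => simp
  | succ n ih =>
    rw [sum_Icc_succ_top (by omega), ← ih, Nat.add_sub_cancel,
      ← sum_Ioc_consecutive F (hb n.le_succ) (hb n.zero_le), add_comm]

theorem Finset.sum_eq_sum_Ioc_card_filter_le {ι : Type*} (s : Finset ι) (f : ι → ℕ) {M : ℕ}
    (hf : ∀ j ∈ s, f j ≤ M) : ∑ j ∈ s, f j = ∑ t ∈ Ioc 0 M, #{j ∈ s | t ≤ f j} := by
  refine Eq.trans (sum_congr rfl fun j hj => ?_)
    (sum_card_bipartiteAbove_eq_sum_card_bipartiteBelow (fun j t => t ≤ f j) (t := Ioc 0 M))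
  have hIoc : bipartiteAbove (fun j t => t ≤ f j) (Ioc 0 M) j = Ioc 0 (f j) := by
    ext t
    simp only [bipartiteAbove, mem_filter, mem_Ioc]
    have := hf j hj
    omega
  rw [hIoc, Nat.card_Ioc, Nat.sub_zero]

theorem Finset.exists_two_mul_sum_eq_of_sum_eq_zero {ι : Type*} {T : Finset ι} {s : ι → ℕ}
    {Z : ι → ℤ} (hZ : ∀ i ∈ T, Z i = s i ∨ Z i = -s i) (h0 : ∑ i ∈ T, Z i = 0) :
    ∃ S ⊆ T, 2 * ∑ i ∈ S, s i = ∑ i ∈ T, s i := by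
  classical
  refine ⟨{i ∈ T | Z i = s i}, filter_subset _ _, ?_⟩
  rw [← sum_filter_add_sum_filter_not T (fun i => Z i = s i)] at h0 ⊢
  rw [sum_congr rfl fun i hi => (mem_filter.mp hi).2,
    sum_congr rfl fun i hi => (hZ i (mem_filter.mp hi).1).resolve_left (mem_filter.mp hi).2,
    sum_neg_distrib] at h0
  zify
  linarith

/-- In the application `c t`, `r t` count the columns and rows reaching the threshold `t`, and
level `i` of the construction occupies the thresholds `(b, b + β]` with `b = (m - i + 1) β`. -/
structure BlockBound (c r : ℕ → ℕ) (i b s β : ℕ) : Prop where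
  pos : 0 < i
  le : s ≤ β
  mul_head : ∀ t ∈ Ioc b (b + s), i * (i + 1) ≤ c t * r t
  const_head : ∀ t ∈ Ioc b (b + s), c t = c (b + s) ∧ r t = r (b + s)
  mul_tail : ∀ t ∈ Ioc (b + s) (b + β), i * i ≤ c t * r t

namespace BlockBound

variable {c r : ℕ → ℕ} {i b s β : ℕ}

theorem sum_Ioc_split {M : Type*} [AddCommMonoid M] (h : BlockBound c r i b s β) (F : ℕ → M) :
    ∑ t ∈ Ioc b (b + β), F t = ∑ t ∈ Ioc b (b + s), F t + ∑ t ∈ Ioc (b + s) (b + β), F t :=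
  (sum_Ioc_consecutive F (by omega) (by have := h.le; omega)).symm

theorem head_le (h : BlockBound c r i b s β) : #(Ioc b (b + s)) * (2 * i + 1) ≤
    ∑ t ∈ Ioc b (b + s), (c t + r t) := by
  simpa using card_nsmul_le_sum _ _ _ fun t ht =>
    two_mul_add_one_le_add_of_mul_succ_le_mul h.pos (h.mul_head t ht)

theorem tail_le (h : BlockBound c r i b s β) : #(Ioc (b + s) (b + β)) * (2 * i) ≤
    ∑ t ∈ Ioc (b + s) (b + β), (c t + r t) := by
  simpa using card_nsmul_le_sum _ _ _ fun t ht =>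
    two_mul_le_add_of_mul_self_le_mul (h.mul_tail t ht)

theorem card_head_mul_add_card_tail_mul (h : BlockBound c r i b s β) :
    #(Ioc b (b + s)) * (2 * i + 1) + #(Ioc (b + s) (b + β)) * (2 * i) = 2 * i * β + s := by
  obtain ⟨d, rfl⟩ := Nat.exists_eq_add_of_le h.le
  simp only [Nat.card_Ioc, Nat.add_sub_cancel_left, show b + (s + d) - (b + s) = d by omega]
  ring

theorem le_sum (h : BlockBound c r i b s β) : 2 * i * β + s ≤ ∑ t ∈ Ioc b (b + β), (c t + r t) := by
  rw [h.sum_Ioc_split, ← h.card_head_mul_add_card_tail_mul]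
  exact add_le_add h.head_le h.tail_le

theorem sum_sub_eq (h : BlockBound c r i b s β)
    (htight : ∑ t ∈ Ioc b (b + β), (c t + r t) = 2 * i * β + s) :
    ∑ t ∈ Ioc b (b + β), ((c t : ℤ) - r t) = s ∨ ∑ t ∈ Ioc b (b + β), ((c t : ℤ) - r t) = -s := by
  rw [h.sum_Ioc_split, ← h.card_head_mul_add_card_tail_mul] at htight
  have hhead := eq_of_forall_le_of_sum_le (fun t ht => two_mul_add_one_le_add_of_mul_succ_le_mul
    h.pos (h.mul_head t ht)) (by have := h.tail_le; omega)
  have htail := eq_of_forall_le_of_sum_le (fun t ht => two_mul_le_add_of_mul_self_le_mul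
    (h.mul_tail t ht)) (by have := h.head_le; omega)
  have htail_zero : ∑ t ∈ Ioc (b + s) (b + β), ((c t : ℤ) - r t) = 0 :=
    sum_eq_zero fun t ht => by
      rw [eq_of_mul_self_le_mul_of_add_eq (h.mul_tail t ht) (htail t ht), sub_self]
  have hhead_const :
      ∑ t ∈ Ioc b (b + s), ((c t : ℤ) - r t) = s * ((c (b + s) : ℤ) - r (b + s)) := by
    rw [sum_congr rfl fun t ht => by rw [(h.const_head t ht).1, (h.const_head t ht).2], sum_const,
      Nat.card_Ioc, Nat.add_sub_cancel_left, nsmul_eq_mul]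
  rw [h.sum_Ioc_split, htail_zero, add_zero, hhead_const]
  rcases Nat.eq_zero_or_pos s with hs | hs
  · simp [hs]
  · have hmem : b + s ∈ Ioc b (b + s) := by simp [hs]
    rcases sub_eq_one_or_of_mul_succ_le_mul_of_add_eq (h.mul_head _ hmem) (hhead _ hmem)
      with h1 | h1
    · left; rw [h1, mul_one]
    · right; rw [h1]; ring

end BlockBound

theorem sum_Ioc_zero_succ_mul {M : Type*} [AddCommMonoid M] (F : ℕ → M) (m β : ℕ) :
    ∑ t ∈ Ioc 0 ((m + 1) * β), F t = ∑ t ∈ Ioc 0 β, F t +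
      ∑ i ∈ Icc 1 m, ∑ t ∈ Ioc ((m - i + 1) * β) ((m - i + 1) * β + β), F t := by
  have hb : Antitone fun i => (m - i + 1) * β := fun i j hij => Nat.mul_le_mul_right β (by omega)
  have := sum_Ioc_eq_sum_Icc_of_antitone F hb m
  simp only [Nat.sub_self, Nat.sub_zero, zero_add, one_mul] at this
  rw [← sum_Ioc_consecutive F (Nat.zero_le β) (Nat.le_mul_of_pos_left β m.succ_pos), this]
  refine congrArg _ (sum_congr rfl fun i hi => ?_)
  obtain ⟨hi1, him⟩ := mem_Icc.mp hi
  rw [show m - (i - 1) + 1 = m - i + 1 + 1 by omega, add_one_mul (m - i + 1)]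

theorem sum_Icc_two_mul_mul_add (m β : ℕ) (s : ℕ → ℕ) :
    ∑ i ∈ Icc 1 m, (2 * i * β + s i) = m * (m + 1) * β + ∑ i ∈ Icc 1 m, s i := by
  induction m with
  | zero => simp
  | succ m ih => rw [sum_Icc_succ_top (by omega), sum_Icc_succ_top (by omega), ih]; ring

theorem exists_two_mul_sum_eq_of_blockBound {c r s : ℕ → ℕ} {m β : ℕ}
    (hβ : β = ∑ i ∈ Icc 1 m, s i)
    (hblock : ∀ i ∈ Icc 1 m, BlockBound c r i ((m - i + 1) * β) (s i) β)
    (hbot : BlockBound c r (m + 1) 0 0 β)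
    (hc : 2 * ∑ t ∈ Ioc 0 ((m + 1) * β), c t ≤ (m + 1) * (m + 2) * β + β)
    (hr : 2 * ∑ t ∈ Ioc 0 ((m + 1) * β), r t ≤ (m + 1) * (m + 2) * β + β) :
    ∃ S ⊆ Icc 1 m, 2 * ∑ i ∈ S, s i = β := by
  have hbot_le := hbot.le_sum
  simp only [zero_add, add_zero] at hbot_le
  have hblocks_le := sum_le_sum fun i hi => (hblock i hi).le_sum
  rw [sum_Icc_two_mul_mul_add, ← hβ] at hblocks_le
  have hdecomp := sum_Ioc_zero_succ_mul (fun t => c t + r t) m β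
  rw [sum_add_distrib] at hdecomp
  have hgauss : (m + 1) * (m + 2) * β = 2 * (m + 1) * β + m * (m + 1) * β := by ring
  have htight : ∀ i ∈ Icc 1 m,
      ∑ t ∈ Ioc ((m - i + 1) * β) ((m - i + 1) * β + β), (c t + r t) = 2 * i * β + s i := by
    refine fun i hi => ((sum_eq_sum_iff_of_le fun i hi => (hblock i hi).le_sum).mp ?_ i hi).symm
    rw [sum_Icc_two_mul_mul_add, ← hβ]
    omega
  rw [sum_congr rfl htight, sum_Icc_two_mul_mul_add, ← hβ] at hdecomp
  have hbot_tight : ∑ t ∈ Ioc 0 (0 + β), (c t + r t) = 2 * (m + 1) * β + 0 := by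
    simp only [zero_add, add_zero]
    omega
  have hcr : ∑ t ∈ Ioc 0 ((m + 1) * β), c t = ∑ t ∈ Ioc 0 ((m + 1) * β), r t := by omega
  have hsub := sum_Ioc_zero_succ_mul (fun t => (c t : ℤ) - r t) m β
  rw [sum_sub_distrib, ← Nat.cast_sum, ← Nat.cast_sum, hcr, sub_self,
    show ∑ t ∈ Ioc 0 β, ((c t : ℤ) - r t) = 0 by simpa using hbot.sum_sub_eq hbot_tight,
    zero_add] at hsub
  rw [hβ]
  exact exists_two_mul_sum_eq_of_sum_eq_zero
    (fun i hi => (hblock i hi).sum_sub_eq (htight i hi)) hsub.symm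

theorem IsLayout.one_le {p q : ℕ} {A : Fin p → Fin q → ℕ} (hA : IsLayout p q A) (i : Fin p)
    (j : Fin q) : 1 ≤ A i j :=
  (hA.2.symm ▸ Set.mem_range_self (i, j) : A i j ∈ Set.Icc 1 (p * q)).1

theorem IsLayout.exists_eq {p q : ℕ} {A : Fin p → Fin q → ℕ} (hA : IsLayout p q A) {k : ℕ}
    (hk1 : 1 ≤ k) (hk : k ≤ p * q) : ∃ i j, A i j = k := by
  obtain ⟨⟨i, j⟩, hij⟩ :=
    (hA.2.symm ▸ ⟨hk1, hk⟩ : k ∈ Set.range fun ij : Fin p × Fin q => A ij.1 ij.2)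
  exact ⟨i, j, hij⟩

section Layout

variable {p q : ℕ} (l : ℕ → ℕ) (A : Fin p → Fin q → ℕ)

def colsAtLeast (t : ℕ) : ℕ := #{j | t ≤ univ.sup fun i => l (A i j)}

def rowsAtLeast (t : ℕ) : ℕ := colsAtLeast l (fun j i => A i j) t

theorem layW_eq_sum_colsAtLeast {M : ℕ} (hM : ∀ i j, l (A i j) ≤ M) :
    layW l A = ∑ t ∈ Ioc 0 M, colsAtLeast l A t :=
  sum_eq_sum_Ioc_card_filter_le _ _ fun j _ => Finset.sup_le fun i _ => hM i j

theorem layH_eq_sum_rowsAtLeast {M : ℕ} (hM : ∀ i j, l (A i j) ≤ M) :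
    layH l A = ∑ t ∈ Ioc 0 M, rowsAtLeast l A t :=
  layW_eq_sum_colsAtLeast l (fun j i => A i j) fun j i => hM i j

theorem card_le_colsAtLeast_mul_rowsAtLeast {T : Finset ℕ} {t : ℕ}
    (hT : ∀ k ∈ T, t ≤ l k ∧ ∃ i j, A i j = k) :
    #T ≤ colsAtLeast l A t * rowsAtLeast l A t := by
  classical
  calc #T ≤ #((({i | t ≤ univ.sup fun j => l (A i j)} : Finset (Fin p)) ×ˢ
        ({j | t ≤ univ.sup fun i => l (A i j)} : Finset (Fin q))).image
        fun ij => A ij.1 ij.2) := by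
        refine card_le_card fun k hk => ?_
        obtain ⟨hkt, i, j, rfl⟩ := hT k hk
        exact mem_image.mpr ⟨(i, j), by
          simp only [mem_product, mem_filter, mem_univ, true_and]
          exact ⟨hkt.trans (le_sup (f := fun j => l (A i j)) (mem_univ j)),
            hkt.trans (le_sup (f := fun i => l (A i j)) (mem_univ i))⟩, rfl⟩
    _ ≤ _ := card_image_le.trans (by rw [card_product, mul_comm]; rfl)

theorem card_filter_le_eq_of_gap {ι : Type*} (s : Finset ι) {f : ι → ℕ} {a b t : ℕ}
    (hgap : ∀ j ∈ s, f j ≤ a ∨ b ≤ f j) (ht : t ∈ Ioc a b) :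
    #{j ∈ s | t ≤ f j} = #{j ∈ s | b ≤ f j} := by
  obtain ⟨hat, htb⟩ := mem_Ioc.mp ht
  congr 1
  refine filter_congr fun j hj => ⟨fun h => ?_, fun h => htb.trans h⟩
  exact (hgap j hj).resolve_left (by omega)

theorem colsAtLeast_eq_of_gap {a b t : ℕ} (hgap : ∀ i j, l (A i j) ≤ a ∨ b ≤ l (A i j))
    (ht : t ∈ Ioc a b) : colsAtLeast l A t = colsAtLeast l A b := by
  refine card_filter_le_eq_of_gap _ (fun j _ => ?_) ht
  by_cases h : ∃ i, a < l (A i j)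
  · obtain ⟨i, hi⟩ := h
    exact .inr (((hgap i j).resolve_left hi.not_ge).trans
      (le_sup (f := fun i => l (A i j)) (mem_univ i)))
  · exact .inl (Finset.sup_le fun i _ => not_lt.mp fun hi => h ⟨i, hi⟩)

theorem rowsAtLeast_eq_of_gap {a b t : ℕ} (hgap : ∀ i j, l (A i j) ≤ a ∨ b ≤ l (A i j))
    (ht : t ∈ Ioc a b) : rowsAtLeast l A t = rowsAtLeast l A b :=
  colsAtLeast_eq_of_gap l (fun j i => A i j) (fun j i => hgap i j) ht

end Layout

structure SippLengths (m : ℕ) (s : ℕ → ℕ) (β : ℕ) (l : ℕ → ℕ) : Prop where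
  one : l 1 = (m + 1) * β
  head : ∀ i, 1 ≤ i → i ≤ m → ∀ j, i ^ 2 + 1 ≤ j → j ≤ i * (i + 1) → l j = (m - i + 1) * β + s i
  tail : ∀ i, 1 ≤ i → i ≤ m → ∀ j, i * (i + 1) + 1 ≤ j → j ≤ (i + 1) ^ 2 → l j = (m - i + 1) * β
  zero : ∀ k, (m + 1) ^ 2 < k → l k = 0

namespace SippLengths

variable {m β i : ℕ} {s l : ℕ → ℕ}

theorem apply_mul_succ (h : SippLengths m s β l) (hi : 1 ≤ i) (him : i ≤ m) :
    l (i * (i + 1)) = (m - i + 1) * β + s i :=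
  h.head i hi him _ (by nlinarith) le_rfl

theorem apply_mul_succ_add_one (h : SippLengths m s β l) (hi : 1 ≤ i) (him : i ≤ m) :
    l (i * (i + 1) + 1) = (m - i + 1) * β :=
  h.tail i hi him _ le_rfl (by nlinarith)

theorem apply_succ_sq (h : SippLengths m s β l) (him : i ≤ m) :
    l ((i + 1) ^ 2) = (m - i + 1) * β := by
  rcases i.eq_zero_or_pos with rfl | hi
  · simpa using h.one
  · exact h.tail i hi him _ (by nlinarith) le_rfl

theorem antitoneOn (h : SippLengths m s β l) (hs : ∀ i, 1 ≤ i → i ≤ m → s i ≤ β) :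
    AntitoneOn l (Set.Ici 1) := by
  refine antitoneOn_nat_Ici_of_succ_le fun k hk => ?_
  by_cases hbig : (m + 1) ^ 2 < k + 1
  · rw [h.zero _ hbig]
    exact Nat.zero_le _
  obtain ⟨i, hlo, hhi⟩ : ∃ i, i ^ 2 ≤ k ∧ k < (i + 1) ^ 2 :=
    ⟨k.sqrt, k.sqrt_le', k.lt_succ_sqrt'⟩
  have hsq : i * (i + 1) = i ^ 2 + i := by ring
  have hsq' : (i + 1) ^ 2 = i ^ 2 + 2 * i + 1 := by ring
  have hi : 1 ≤ i := by nlinarith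
  have him : i ≤ m := by
    by_contra! hmi
    have : (m + 1) ^ 2 ≤ i ^ 2 := Nat.pow_le_pow_left hmi 2
    omega
  rcases le_or_gt (k + 1) (i * (i + 1)) with hhead | htail
  · rw [h.head i hi him (k + 1) (by omega) hhead]
    rcases (show i ^ 2 = k ∨ i ^ 2 + 1 ≤ k by omega) with hk | hk
    · obtain ⟨j, rfl⟩ : ∃ j, i = j + 1 := ⟨i - 1, by omega⟩
      have hstep : (m - (j + 1) + 1) * β + β = (m - j + 1) * β := by
        rw [← add_one_mul]; congr 1; omega
      rw [← hk, h.apply_succ_sq (by omega), ← hstep]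
      exact Nat.add_le_add_left (hs (j + 1) hi him) _
    · rw [h.head i hi him k hk (by omega)]
  · rw [h.tail i hi him (k + 1) (by omega) (by omega)]
    rcases le_or_gt k (i * (i + 1)) with hk | hk
    · rw [h.head i hi him k (by omega) hk]
      omega
    · rw [h.tail i hi him k hk (by omega)]

variable {p q : ℕ} {A : Fin p → Fin q → ℕ}

theorem apply_le_or_add_le (h : SippLengths m s β l) (hs : ∀ i, 1 ≤ i → i ≤ m → s i ≤ β)
    (hi : 1 ≤ i) (him : i ≤ m) {k : ℕ} (hk : 1 ≤ k) : l k ≤ (m - i + 1) * β ∨ (m - i + 1) * β + s i ≤ l k := by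
  rcases le_or_gt k (i * (i + 1)) with hki | hki
  · exact .inr (h.apply_mul_succ hi him ▸ h.antitoneOn hs hk (hk.trans hki) hki)
  · exact .inl (h.apply_mul_succ_add_one hi him ▸
      h.antitoneOn hs (Nat.le_add_left 1 _) hk hki)

theorem le_colsAtLeast_mul_rowsAtLeast (h : SippLengths m s β l)
    (hs : ∀ i, 1 ≤ i → i ≤ m → s i ≤ β) (hA : IsLayout p q A) (hpq : (m + 1) ^ 2 ≤ p * q)
    {K t : ℕ} (hK : K ≤ (m + 1) ^ 2) (ht : t ≤ l K) :
    K ≤ colsAtLeast l A t * rowsAtLeast l A t := by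
  simpa using card_le_colsAtLeast_mul_rowsAtLeast l A (T := Icc 1 K) fun k hk =>
    ⟨ht.trans (h.antitoneOn hs (mem_Icc.1 hk).1 ((mem_Icc.1 hk).1.trans (mem_Icc.1 hk).2)
      (mem_Icc.1 hk).2), hA.exists_eq (mem_Icc.1 hk).1 ((mem_Icc.1 hk).2.trans (hK.trans hpq))⟩

theorem blockBound (h : SippLengths m s β l) (hs : ∀ i, 1 ≤ i → i ≤ m → s i ≤ β)
    (hA : IsLayout p q A) (hpq : (m + 1) ^ 2 ≤ p * q) (hi : 1 ≤ i) (him : i ≤ m) :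
    BlockBound (colsAtLeast l A) (rowsAtLeast l A) i ((m - i + 1) * β) (s i) β where
  pos := hi
  le := hs i hi him
  mul_head t ht := h.le_colsAtLeast_mul_rowsAtLeast hs hA hpq (by nlinarith)
    (h.apply_mul_succ hi him ▸ (mem_Ioc.1 ht).2)
  const_head t ht :=
    have hgap i' j' := h.apply_le_or_add_le hs hi him (hA.one_le i' j')
    ⟨colsAtLeast_eq_of_gap l A hgap ht, rowsAtLeast_eq_of_gap l A hgap ht⟩
  mul_tail t ht := by
    obtain ⟨j, rfl⟩ : ∃ j, i = j + 1 := ⟨i - 1, by omega⟩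
    have hstep : (m - (j + 1) + 1) * β + β = (m - j + 1) * β := by
      rw [← add_one_mul]; congr 1; omega
    rw [← sq]
    refine h.le_colsAtLeast_mul_rowsAtLeast hs hA hpq (Nat.pow_le_pow_left (by omega) 2) ?_
    rw [h.apply_succ_sq (i := j) (by omega), ← hstep]
    exact (mem_Ioc.1 ht).2

/-- The thresholds `(0, β]`, reached by all `(m + 1)²` squares, form a block with empty head. -/
theorem blockBound_bottom (h : SippLengths m s β l) (hs : ∀ i, 1 ≤ i → i ≤ m → s i ≤ β)
    (hA : IsLayout p q A) (hpq : (m + 1) ^ 2 ≤ p * q) :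
    BlockBound (colsAtLeast l A) (rowsAtLeast l A) (m + 1) 0 0 β where
  pos := m.succ_pos
  le := Nat.zero_le β
  mul_head t ht := by simp at ht
  const_head t ht := by simp at ht
  mul_tail t ht := by
    rw [← sq]
    refine h.le_colsAtLeast_mul_rowsAtLeast hs hA hpq le_rfl ?_
    rw [h.apply_succ_sq le_rfl, Nat.sub_self, zero_add, one_mul]
    simpa using (mem_Ioc.1 ht).2

end SippLengths

theorem sipp_to_partition_general (m : ℕ) (s : ℕ → ℕ)
    (β : ℕ) (hβ : β = ∑ i ∈ Finset.Icc 1 m, s i)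
    (l : ℕ → ℕ) (hl1 : l 1 = (m + 1) * β)
    (hla : ∀ i, 1 ≤ i → i ≤ m → ∀ j, i ^ 2 + 1 ≤ j → j ≤ i * (i + 1) →
      l j = (m - i + 1) * β + s i)
    (hlb : ∀ i, 1 ≤ i → i ≤ m → ∀ j, i * (i + 1) + 1 ≤ j → j ≤ (i + 1) ^ 2 →
      l j = (m - i + 1) * β)
    (hl0 : ∀ k, (m + 1) ^ 2 < k → l k = 0)
    (p q : ℕ) (A : Fin p → Fin q → ℕ)
    (hpq : (m + 1) ^ 2 ≤ p * q) (hA : IsLayout p q A)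
    (hW : (layW l A : ℚ) ≤ ((m + 1) * (m + 2) * β : ℚ) / 2 + (β : ℚ) / 2)
    (hH : (layH l A : ℚ) ≤ ((m + 1) * (m + 2) * β : ℚ) / 2 + (β : ℚ) / 2) :
    ∃ S : Finset ℕ, S ⊆ Finset.Icc 1 m ∧ (∑ i ∈ S, (s i : ℚ)) = (β : ℚ) / 2 := by
  have hsβ : ∀ i, 1 ≤ i → i ≤ m → s i ≤ β := fun i hi him =>
    hβ ▸ single_le_sum (fun j _ => Nat.zero_le (s j)) (mem_Icc.mpr ⟨hi, him⟩)
  have hl : SippLengths m s β l := ⟨hl1, hla, hlb, hl0⟩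
  have hM : ∀ i j, l (A i j) ≤ (m + 1) * β := fun i j =>
    hl1 ▸ hl.antitoneOn hsβ (Set.mem_Ici.2 le_rfl) (hA.one_le i j) (hA.one_le i j)
  obtain ⟨S, hS, hsum⟩ := exists_two_mul_sum_eq_of_blockBound hβ
    (fun i hi => hl.blockBound hsβ hA hpq (mem_Icc.1 hi).1 (mem_Icc.1 hi).2)
    (hl.blockBound_bottom hsβ hA hpq)
    (by rw [← layW_eq_sum_colsAtLeast l A hM]; qify; linarith)
    (by rw [← layH_eq_sum_rowsAtLeast l A hM]; qify; linarith)
  refine ⟨S, hS, ?_⟩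
  qify at hsum
  linarith

/-- Backward direction of the NP-hardness reduction: if the constructed SIPP
instance admits a layout of width at most `b` and height at most `λ`, where
`b = λ = (m+1)(m+2)β/2 + β/2`, then the partition instance has a subset summing to `β/2`. -/
theorem sipp_to_partition (m : ℕ) (s : ℕ → ℕ)
    (hs : ∀ i, 1 ≤ i → i ≤ m → 0 < s i)
    (β : ℕ) (hβ : β = ∑ i ∈ Finset.Icc 1 m, s i)
    (l : ℕ → ℕ) (hl1 : l 1 = (m + 1) * β)
    (hla : ∀ i, 1 ≤ i → i ≤ m → ∀ j, i ^ 2 + 1 ≤ j → j ≤ i * (i + 1) →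
      l j = (m - i + 1) * β + s i)
    (hlb : ∀ i, 1 ≤ i → i ≤ m → ∀ j, i * (i + 1) + 1 ≤ j → j ≤ (i + 1) ^ 2 →
      l j = (m - i + 1) * β)
    (hl0 : ∀ k, (m + 1) ^ 2 < k → l k = 0)
    (p q : ℕ) (A : Fin p → Fin q → ℕ)
    (hpq : (m + 1) ^ 2 ≤ p * q) (hA : IsLayout p q A)
    (hW : (layW l A : ℚ) ≤ ((m + 1) * (m + 2) * β : ℚ) / 2 + (β : ℚ) / 2)
    (hH : (layH l A : ℚ) ≤ ((m + 1) * (m + 2) * β : ℚ) / 2 + (β : ℚ) / 2) :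
    ∃ S : Finset ℕ, S ⊆ Finset.Icc 1 m ∧ (∑ i ∈ S, (s i : ℚ)) = (β : ℚ) / 2 :=
  sipp_to_partition_general m s β hβ l hl1 hla hlb hl0 p q A hpq hA hW hH
end
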